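/- Suppose f : ℝ → ℝ is differentiable with (v₁ − v₂)(f'(v₁) − f'(v₂)) ≤ −α(v₁ − v₂)² for some α > 0 and all v₁, v₂ (strong concavity), and |f'(v₁) − f'(v₂)| ≤ L|v₁ − v₂|. Let I be a closed interval, and for i = 1,2 define v̂ᵢ = (f')^{-1}(−cᵢ) and vᵢ = Proj_I(v̂ᵢ). Then (v₁ − v₂)(c₁ − c₂) ≥ α(v₁ − v₂)². -/

import Mathlib

/-!
Strong concavity makes `f'` antitone, so `φ = -f'` is monotone and `cᵢ = φ v̂ᵢ`. The clamp
`p x = max l (min u x)` can only move two points towards each other: if `p v̂₂ < p v̂₁` then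
`v̂₂ ≤ p v̂₂` and `p v̂₁ ≤ v̂₁`, hence
`(p v̂₁ - p v̂₂) (φ (p v̂₁) - φ (p v̂₂)) ≤ (p v̂₁ - p v̂₂) (φ v̂₁ - φ v̂₂)`.
The left side is at least `α (p v̂₁ - p v̂₂)²` by strong concavity at the clamped points.
-/

section OrderedRing

variable {R : Type*} [CommRing R] [LinearOrder R] [IsStrictOrderedRing R] {l u a b : R}

theorem antitone_of_mul_sub_nonpos {g : R → R} (h : ∀ x y, (x - y) * (g x - g y) ≤ 0) :
    Antitone g := by
  intro x y hxy
  rcases hxy.eq_or_lt with rfl | hlt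
  · rfl
  · by_contra! hg
    exact (h y x).not_gt (mul_pos (sub_pos.2 hlt) (sub_pos.2 hg))

theorem le_max_min_of_max_min_lt (h : max l (min u b) < max l (min u a)) :
    b ≤ max l (min u b) := by grind

theorem max_min_le_of_max_min_lt (h : max l (min u b) < max l (min u a)) :
    max l (min u a) ≤ a := by grind

theorem mul_sub_le_mul_sub_of_max_min_lt {φ : R → R} (hφ : Monotone φ)
    (h : max l (min u b) < max l (min u a)) :
    (max l (min u a) - max l (min u b)) * (φ (max l (min u a)) - φ (max l (min u b)))
      ≤ (max l (min u a) - max l (min u b)) * (φ a - φ b) := by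
  have ha := hφ (max_min_le_of_max_min_lt h)
  have hb := hφ (le_max_min_of_max_min_lt h)
  exact mul_le_mul_of_nonneg_left (by linarith) (sub_nonneg.2 h.le)

theorem mul_sub_le_mul_sub_max_min {φ : R → R} (hφ : Monotone φ) (l u a b : R) :
    (max l (min u a) - max l (min u b)) * (φ (max l (min u a)) - φ (max l (min u b)))
      ≤ (max l (min u a) - max l (min u b)) * (φ a - φ b) := by
  rcases lt_trichotomy (max l (min u b)) (max l (min u a)) with h | h | h
  · exact mul_sub_le_mul_sub_of_max_min_lt hφ h
  · simp [h]
  · have := mul_sub_le_mul_sub_of_max_min_lt hφ h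
    linarith

end OrderedRing

theorem weak_monotonicity_of_projected_optimizers_general
    (α : ℝ) (hα : 0 < α)
    (f' : ℝ → ℝ)
    (hconc : ∀ v₁ v₂ : ℝ, (v₁ - v₂) * (f' v₁ - f' v₂) ≤ -α * (v₁ - v₂)^2)
    (l u : ℝ)
    (c₁ c₂ vhat₁ vhat₂ : ℝ)
    (h₁ : f' vhat₁ = -c₁) (h₂ : f' vhat₂ = -c₂) :
    α * (max l (min u vhat₁) - max l (min u vhat₂))^2
      ≤ (max l (min u vhat₁) - max l (min u vhat₂)) * (c₁ - c₂) := by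
  have hanti : Antitone f' := antitone_of_mul_sub_nonpos fun x y =>
    (hconc x y).trans (mul_nonpos_of_nonpos_of_nonneg (neg_nonpos.2 hα.le) (sq_nonneg _))
  set v₁ := max l (min u vhat₁)
  set v₂ := max l (min u vhat₂)
  calc α * (v₁ - v₂) ^ 2 ≤ (v₁ - v₂) * (-f' v₁ - -f' v₂) := by linarith [hconc v₁ v₂]
    _ ≤ (v₁ - v₂) * (-f' vhat₁ - -f' vhat₂) :=
      mul_sub_le_mul_sub_max_min hanti.neg l u vhat₁ vhat₂
    _ = (v₁ - v₂) * (c₁ - c₂) := by rw [h₁, h₂]; ring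

/-- Weak monotonicity through projections: if `f'` is the derivative of a strongly
concave function (`(v₁−v₂)(f'(v₁)−f'(v₂)) ≤ −α(v₁−v₂)²` with `α > 0`) and is
`L`-Lipschitz, and `v̂ᵢ = (f')⁻¹(−cᵢ)`, `vᵢ = Proj_{[l,u]}(v̂ᵢ)`, then
`(v₁ − v₂)(c₁ − c₂) ≥ α (v₁ − v₂)²`. -/
theorem weak_monotonicity_of_projected_optimizers
    (α L : ℝ) (hα : 0 < α) (hL : 0 ≤ L)
    (f f' : ℝ → ℝ)
    (hderiv : ∀ v, HasDerivAt f (f' v) v)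
    (hconc : ∀ v₁ v₂ : ℝ, (v₁ - v₂) * (f' v₁ - f' v₂) ≤ -α * (v₁ - v₂)^2)
    (hlip : ∀ v₁ v₂ : ℝ, |f' v₁ - f' v₂| ≤ L * |v₁ - v₂|)
    (l u : ℝ) (hlu : l ≤ u)
    (c₁ c₂ vhat₁ vhat₂ : ℝ)
    (h₁ : f' vhat₁ = -c₁) (h₂ : f' vhat₂ = -c₂) :
    α * (max l (min u vhat₁) - max l (min u vhat₂))^2
      ≤ (max l (min u vhat₁) - max l (min u vhat₂)) * (c₁ - c₂) :=
  weak_monotonicity_of_projected_optimizers_general α hα f' hconc l u c₁ c₂ vhat₁ vhat₂ h₁ h₂
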